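/- Let X be a Banach space and let κ be an uncountable cardinal. Let (x_α)_{α<κ} be a family in X equivalent to the standard unit vector basis of c₀(κ), or equivalent to the standard unit vector basis of ℓ_p(κ) for some p ∈ (1, ∞). Let Y be a Banach space that has an M-basis (b_j, f_j)_{j∈J}, and let T ∈ B(X, Y) be non-zero. Then there exists Λ ⊆ κ with |Λ| = κ such that the vectors (T x_α)_{α∈Λ} are pairwise disjointly supported, i.e. supp(T x_α) ∩ supp(T x_β) = ∅ for all distinct α, β ∈ Λ. -/

import Mathlib

noncomputable section

open scoped ENNReal NNReal

/-- The space `ℓ_p(ι)` of `p`-summable real families indexed by `ι`, as a type.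
For `p = ∞` this is the space of bounded families with the supremum norm. -/
abbrev ellp (ι : Type*) (p : ℝ≥0∞) : Type _ := lp (fun _ : ι => ℝ) p

/-- The standard unit vector `e_α` of `ℓ_p(ι)`. -/
def stdVec (ι : Type*) (p : ℝ≥0∞) (α : ι) : ellp ι p :=
  letI := Classical.decEq ι
  lp.single p α 1

/-- `c₀(ι)`, realised as the submodule of `ℓ∞(ι)` consisting of those families `f` such
that `{i | ε ≤ |f i|}` is finite for every `ε > 0`; it carries the supremum norm. -/
def c0Submodule (ι : Type*) : Submodule ℝ (ellp ι ∞) where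
  carrier := {f | ∀ ε : ℝ, 0 < ε → {i : ι | ε ≤ |f i|}.Finite}
  zero_mem' := by
    intro ε hε
    have h : {i : ι | ε ≤ |(0 : ellp ι ∞) i|} = ∅ := by
      ext i
      simp [lp.coeFn_zero, hε.not_ge]
    rw [h]
    exact Set.finite_empty
  add_mem' := by
    intro f g hf hg ε hε
    have h2 : 0 < ε / 2 := by linarith
    refine ((hf _ h2).union (hg _ h2)).subset ?_
    intro i hi
    simp only [Set.mem_setOf_eq, lp.coeFn_add, Pi.add_apply] at hi
    by_contra hcon
    simp only [Set.mem_union, Set.mem_setOf_eq, not_or, not_le] at hcon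
    have habs : |f i + g i| ≤ |f i| + |g i| := abs_add_le _ _
    linarith [hcon.1, hcon.2]
  smul_mem' := by
    intro c f hf ε hε
    rcases eq_or_ne c 0 with rfl | hc
    · have h : {i : ι | ε ≤ |((0 : ℝ) • f) i|} = ∅ := by
        ext i
        simp [zero_smul, hε.not_ge]
      rw [h]
      exact Set.finite_empty
    · have hcpos : 0 < |c| := abs_pos.2 hc
      refine (hf (ε / |c|) (by positivity)).subset ?_
      intro i hi
      simp only [Set.mem_setOf_eq, lp.coeFn_smul, Pi.smul_apply, smul_eq_mul, abs_mul] at hi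
      simp only [Set.mem_setOf_eq]
      rw [div_le_iff₀ hcpos]
      linarith [hi, mul_comm (|c|) (|f i|)]

/-- The Banach space `c₀(ι)` with the supremum norm. -/
abbrev c0Space (ι : Type*) : Type _ := ↥(c0Submodule ι)

/-- `ℓ∞^c(ι)`: the submodule of `ℓ∞(ι)` of countably supported bounded families,
with the supremum norm. -/
def lInftyCSubmodule (ι : Type*) : Submodule ℝ (ellp ι ∞) where
  carrier := {f | {i : ι | f i ≠ 0}.Countable}
  zero_mem' := by
    have h : {i : ι | (0 : ellp ι ∞) i ≠ 0} = ∅ := by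
      ext i
      simp [lp.coeFn_zero]
    rw [Set.mem_setOf_eq, h]
    exact Set.countable_empty
  add_mem' := by
    intro f g hf hg
    refine (hf.union hg).mono ?_
    intro i hi
    simp only [Set.mem_setOf_eq, lp.coeFn_add, Pi.add_apply] at hi
    by_contra hcon
    simp only [Set.mem_union, Set.mem_setOf_eq, not_or, not_not] at hcon
    rw [hcon.1, hcon.2, add_zero] at hi
    exact hi rfl
  smul_mem' := by
    intro c f hf
    refine hf.mono ?_
    intro i hi
    simp only [Set.mem_setOf_eq, lp.coeFn_smul, Pi.smul_apply, smul_eq_mul] at hi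
    simp only [Set.mem_setOf_eq]
    intro h
    rw [h, mul_zero] at hi
    exact hi rfl

/-- The Banach space `ℓ∞^c(ι)` with the supremum norm. -/
abbrev lInftyCSpace (ι : Type*) : Type _ := ↥(lInftyCSubmodule ι)

lemma stdVec_mem_c0 (ι : Type*) (α : ι) : stdVec ι ∞ α ∈ c0Submodule ι := by
  letI := Classical.decEq ι
  intro ε hε
  refine (Set.finite_singleton α).subset ?_
  intro i hi
  simp only [Set.mem_setOf_eq] at hi
  simp only [Set.mem_singleton_iff]
  by_contra h
  rw [stdVec] at hi
  rw [lp.single_apply_ne _ _ _ h] at hi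
  simp at hi
  linarith

lemma stdVec_mem_lInftyC (ι : Type*) (α : ι) : stdVec ι ∞ α ∈ lInftyCSubmodule ι := by
  letI := Classical.decEq ι
  refine (Set.countable_singleton α).mono ?_
  intro i hi
  simp only [Set.mem_setOf_eq] at hi
  simp only [Set.mem_singleton_iff]
  by_contra h
  rw [stdVec, lp.single_apply_ne _ _ _ h] at hi
  exact hi rfl

/-- The standard unit vector `e_α` of `c₀(ι)`. -/
def c0Vec (ι : Type*) (α : ι) : c0Space ι := ⟨stdVec ι ∞ α, stdVec_mem_c0 ι α⟩

/-- The standard unit vector `e_α` of `ℓ∞^c(ι)`. -/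
def lInftyCVec (ι : Type*) (α : ι) : lInftyCSpace ι := ⟨stdVec ι ∞ α, stdVec_mem_lInftyC ι α⟩

/-- `T` preserves an isomorphic copy of `Z`: there is a closed subspace `W` of `X`,
isomorphic to `Z`, on which `T` is bounded below. -/
def PreservesCopy {X : Type*} [NormedAddCommGroup X] [NormedSpace ℝ X]
    (Z : Type*) [NormedAddCommGroup Z] [NormedSpace ℝ Z] (T : X →L[ℝ] X) : Prop :=
  ∃ W : Submodule ℝ X, IsClosed (W : Set X) ∧ Nonempty (W ≃L[ℝ] Z) ∧
    ∃ γ : ℝ, 0 < γ ∧ ∀ w ∈ W, γ * ‖w‖ ≤ ‖T w‖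

/-- The set `𝒮_Z(X)` of `Z`-singular operators on `X`. -/
def SZ (Z : Type*) [NormedAddCommGroup Z] [NormedSpace ℝ Z]
    (X : Type*) [NormedAddCommGroup X] [NormedSpace ℝ X] : Set (X →L[ℝ] X) :=
  {T | ¬ PreservesCopy Z T}

/-- A sequence of operators SOT-converges to `T₀` if it converges pointwise in norm. -/
def SOTConvergesTo {X : Type*} [NormedAddCommGroup X] [NormedSpace ℝ X]
    (T : ℕ → X →L[ℝ] X) (T₀ : X →L[ℝ] X) : Prop :=
  ∀ x : X, Filter.Tendsto (fun n => T n x) Filter.atTop (nhds (T₀ x))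

/-- An M-basis `(b_j, f_j)_{j ∈ J}` for a Banach space `X`: a biorthogonal system which is
fundamental (the span of the `b_j` is dense) and total (the span of the `f_j` is
weak*-dense in the dual). -/
structure IsMBasis {X : Type*} [NormedAddCommGroup X] [NormedSpace ℝ X] {J : Type*}
    (b : J → X) (f : J → X →L[ℝ] ℝ) : Prop where
  biorth_self : ∀ j, f j (b j) = 1
  biorth_ne : ∀ i j, i ≠ j → f j (b i) = 0
  fundamental : Dense (Submodule.span ℝ (Set.range b) : Set X)
  total : Dense ((Submodule.span ℝ (Set.range fun j => (f j : WeakDual ℝ X)) :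
    Submodule ℝ (WeakDual ℝ X)) : Set (WeakDual ℝ X))

/-- A family `(x_α)` in `X` is equivalent to the standard unit vector basis of `ℓ_q(ι)`
(with `q` a real exponent). -/
def IsLpBasisEquiv {X ι : Type*} [NormedAddCommGroup X] [NormedSpace ℝ X]
    (x : ι → X) (q : ℝ) : Prop :=
  ∃ c C : ℝ, 0 < c ∧ 0 < C ∧ ∀ a : ι →₀ ℝ,
    c * (∑ α ∈ a.support, |a α| ^ q) ^ (1 / q) ≤ ‖a.sum fun α r => r • x α‖ ∧
      ‖a.sum fun α r => r • x α‖ ≤ C * (∑ α ∈ a.support, |a α| ^ q) ^ (1 / q)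

/-- A family `(x_α)` in `X` is equivalent to the standard unit vector basis of `c₀(ι)`. -/
def IsC0BasisEquiv {X ι : Type*} [NormedAddCommGroup X] [NormedSpace ℝ X]
    (x : ι → X) : Prop :=
  ∃ c C : ℝ, 0 < c ∧ 0 < C ∧ ∀ a : ι →₀ ℝ,
    c * ((a.support.sup fun α => ‖a α‖₊) : ℝ≥0) ≤ ‖a.sum fun α r => r • x α‖ ∧
      ‖a.sum fun α r => r • x α‖ ≤ C * ((a.support.sup fun α => ‖a α‖₊) : ℝ≥0)

universe u v w x

/-!
Every `y ∈ Y` has countable support: it is a limit of vectors in the span of the `b_j`, which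
are finitely supported. Every functional `g` on `X` is non-zero at only countably many `x_α`:
the upper `c₀`/`ℓ_p` estimate bounds `‖∑_{α ∈ F} ±x_α‖` by `C |F|^{1/p} = o(|F|)`, while choosing
the signs of `g (x_α)` on a set `F` where `|g (x_α)| ≥ ε` forces that norm to be at least
`ε |F| / ‖g‖`. With `g = f_j ∘ T`, each `j` lies in the support of countably many `T x_α`, so a
maximal subfamily with pairwise disjoint supports cannot have fewer than `κ` members: the indices
conflicting with it form a union of fewer than `κ` countable sets, leaving room to extend it.
-/

open Function

section MBasis

variable {Y J : Type*} [NormedAddCommGroup Y] [NormedSpace ℝ Y] {b : J → Y} {f : J → Y →L[ℝ] ℝ}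

lemma finite_support_of_mem_span (hne : ∀ i j, i ≠ j → f j (b i) = 0) {u : Y}
    (hu : u ∈ Submodule.span ℝ (Set.range b)) : (support fun j => f j u).Finite := by
  obtain ⟨c, rfl⟩ := Finsupp.mem_span_range_iff_exists_finsupp.1 hu
  refine c.support.finite_toSet.subset fun j hj => ?_
  by_contra hjc
  refine hj ?_
  simp only [Finsupp.sum, map_sum, map_smul]
  exact Finset.sum_eq_zero fun i hi => by rw [hne i j (by rintro rfl; exact hjc hi), smul_zero]

lemma support_subset_iUnion_of_tendsto {u : ℕ → Y} {y : Y}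
    (hu : Filter.Tendsto u Filter.atTop (nhds y)) :
    (support fun j => f j y) ⊆ ⋃ n, support fun j => f j (u n) := by
  intro j hj
  by_contra hj'
  simp only [Set.mem_iUnion, mem_support, not_exists, not_not] at hj'
  have hlim := ((f j).continuous.tendsto y).comp hu
  simp only [Function.comp_def, hj'] at hlim
  exact hj (tendsto_nhds_unique hlim tendsto_const_nhds)

lemma countable_support_of_dense_span (hne : ∀ i j, i ≠ j → f j (b i) = 0)
    (hdense : Dense (Submodule.span ℝ (Set.range b) : Set Y)) (y : Y) :
    (support fun j => f j y).Countable := by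
  obtain ⟨u, hu_mem, hu⟩ := mem_closure_iff_seq_limit.1 (hdense y)
  exact (Set.countable_iUnion fun n =>
    (finite_support_of_mem_span hne (hu_mem n)).countable).mono
    (support_subset_iUnion_of_tendsto hu)

end MBasis

section UpperEstimate

variable {X ι : Type*} [NormedAddCommGroup X] [NormedSpace ℝ X]

def HasUpperSumEstimate (x : ι → X) (r : ℝ) : Prop :=
  ∃ C : ℝ, ∀ (F : Finset ι) (σ : ι → ℝ), (∀ α, |σ α| ≤ 1) →
    ‖∑ α ∈ F, σ α • x α‖ ≤ C * (F.card : ℝ) ^ r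

lemma card_mul_le_norm_mul_norm_sum_sign (x : ι → X) (g : X →L[ℝ] ℝ) {ε : ℝ} {F : Finset ι}
    (hF : ∀ α ∈ F, ε ≤ |g (x α)|) :
    F.card * ε ≤ ‖g‖ * ‖∑ α ∈ F, (SignType.sign (g (x α)) : ℝ) • x α‖ :=
  calc (F.card : ℝ) * ε = ∑ _α ∈ F, ε := by rw [Finset.sum_const, nsmul_eq_mul]
    _ ≤ ∑ α ∈ F, |g (x α)| := Finset.sum_le_sum hF
    _ = g (∑ α ∈ F, (SignType.sign (g (x α)) : ℝ) • x α) := by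
      simp only [map_sum, map_smul, smul_eq_mul, sign_mul_self]
    _ ≤ ‖g‖ * ‖∑ α ∈ F, (SignType.sign (g (x α)) : ℝ) • x α‖ :=
      (le_abs_self _).trans (g.le_opNorm _)

lemma HasUpperSumEstimate.finite_setOf_le_abs {x : ι → X} {r : ℝ}
    (hx : HasUpperSumEstimate x r) (hr : r < 1) (g : X →L[ℝ] ℝ) {ε : ℝ} (hε : 0 < ε) :
    {α | ε ≤ |g (x α)|}.Finite := by
  by_contra hinf
  obtain ⟨C, hC⟩ := hx
  have hgrowth : Filter.Tendsto (fun m : ℕ => (m : ℝ) ^ (1 - r)) Filter.atTop Filter.atTop :=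
    (tendsto_rpow_atTop (sub_pos.2 hr)).comp tendsto_natCast_atTop_atTop
  obtain ⟨m, hm_pos, hm⟩ := ((Filter.eventually_gt_atTop 0).and
    (hgrowth.eventually_gt_atTop (‖g‖ * C / ε))).exists
  obtain ⟨F, hFs, rfl⟩ := Set.Infinite.exists_subset_card_eq hinf m
  have hm0 : (0 : ℝ) < F.card := by exact_mod_cast hm_pos
  have hupper : (F.card : ℝ) * ε ≤ ‖g‖ * C * (F.card : ℝ) ^ r := by
    refine (card_mul_le_norm_mul_norm_sum_sign x g hFs).trans ?_
    rw [mul_assoc]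
    refine mul_le_mul_of_nonneg_left (hC F _ fun α => ?_) (norm_nonneg g)
    rcases lt_trichotomy (g (x α)) 0 with h | h | h <;> simp [h]
  have hbound : (F.card : ℝ) ^ (1 - r) * ε ≤ ‖g‖ * C := by
    refine le_of_mul_le_mul_right ?_ (Real.rpow_pos_of_pos hm0 r)
    rwa [mul_right_comm, ← Real.rpow_add hm0, sub_add_cancel, Real.rpow_one]
  linarith [(div_lt_iff₀ hε).1 hm]

lemma HasUpperSumEstimate.countable_setOf_ne_zero {x : ι → X} {r : ℝ}
    (hx : HasUpperSumEstimate x r) (hr : r < 1) (g : X →L[ℝ] ℝ) :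
    {α | g (x α) ≠ 0}.Countable := by
  refine (Set.countable_iUnion fun n : ℕ =>
    (hx.finite_setOf_le_abs hr g (Nat.one_div_pos_of_nat (n := n))).countable).mono ?_
  intro α hα
  obtain ⟨n, hn⟩ := exists_nat_one_div_lt (abs_pos.2 hα)
  exact Set.mem_iUnion.2 ⟨n, hn.le⟩

lemma Finsupp.sum_indicator_smul (F : Finset ι) (σ : ι → ℝ) (x : ι → X) :
    (Finsupp.indicator F fun α _ => σ α).sum (fun α t => t • x α) = ∑ α ∈ F, σ α • x α := by
  rw [Finsupp.sum_of_support_subset _ (Finsupp.support_indicator_subset F _) _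
    fun α _ => zero_smul ℝ (x α)]
  exact Finset.sum_congr rfl fun α hα => by rw [Finsupp.indicator_of_mem hα]

lemma Finsupp.abs_indicator_apply_le_one {F : Finset ι} {σ : ι → ℝ} (hσ : ∀ α, |σ α| ≤ 1)
    (α : ι) : |(Finsupp.indicator F fun α _ => σ α) α| ≤ 1 := by
  classical
  rw [Finsupp.indicator_apply]
  split_ifs
  exacts [hσ α, by simp]

lemma IsC0BasisEquiv.hasUpperSumEstimate {x : ι → X} (hx : IsC0BasisEquiv x) :
    HasUpperSumEstimate x 0 := by
  obtain ⟨_, C, _, hC, hbound⟩ := hx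
  refine ⟨C, fun F σ hσ => ?_⟩
  set a := Finsupp.indicator F fun α _ => σ α
  have hsup : ((a.support.sup fun α => ‖a α‖₊ : ℝ≥0) : ℝ) ≤ 1 := by
    rw [NNReal.coe_le_one]
    refine Finset.sup_le fun α _ => ?_
    rw [← NNReal.coe_le_one, coe_nnnorm, Real.norm_eq_abs]
    exact Finsupp.abs_indicator_apply_le_one hσ α
  calc ‖∑ α ∈ F, σ α • x α‖ = ‖a.sum fun α t => t • x α‖ := by
        rw [Finsupp.sum_indicator_smul]
    _ ≤ C * ((a.support.sup fun α => ‖a α‖₊ : ℝ≥0) : ℝ) := (hbound a).2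
    _ ≤ C * (F.card : ℝ) ^ (0 : ℝ) := by
        rw [Real.rpow_zero, mul_one]
        exact mul_le_of_le_one_right hC.le hsup

lemma IsLpBasisEquiv.hasUpperSumEstimate {x : ι → X} {q : ℝ} (hq : 0 < q)
    (hx : IsLpBasisEquiv x q) : HasUpperSumEstimate x (1 / q) := by
  obtain ⟨_, C, _, hC, hbound⟩ := hx
  refine ⟨C, fun F σ hσ => ?_⟩
  set a := Finsupp.indicator F fun α _ => σ α
  have hsum : ∑ α ∈ a.support, |a α| ^ q ≤ F.card :=
    calc ∑ α ∈ a.support, |a α| ^ q ≤ ∑ _α ∈ a.support, (1 : ℝ) :=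
          Finset.sum_le_sum fun α _ =>
            Real.rpow_le_one (abs_nonneg _) (Finsupp.abs_indicator_apply_le_one hσ α) hq.le
      _ ≤ F.card := by
          rw [Finset.sum_const, nsmul_one]
          exact_mod_cast Finset.card_le_card (Finsupp.support_indicator_subset F _)
  calc ‖∑ α ∈ F, σ α • x α‖ = ‖a.sum fun α t => t • x α‖ := by
        rw [Finsupp.sum_indicator_smul]
    _ ≤ C * (∑ α ∈ a.support, |a α| ^ q) ^ (1 / q) := (hbound a).2
    _ ≤ C * (F.card : ℝ) ^ (1 / q) := by
        gcongr

end UpperEstimate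

section Combinatorics

open Cardinal

variable {ι J : Type*} {S : ι → Set J}

lemma exists_insert_pairwiseDisjoint_of_countable (hκ : ℵ₀ < #ι)
    (hS : ∀ α, (S α).Countable) (hfiber : ∀ j, {α | j ∈ S α}.Countable) {Λ : Set ι}
    (hΛ : Λ.PairwiseDisjoint S) (hlt : #Λ < #ι) :
    ∃ α ∉ Λ, (insert α Λ).PairwiseDisjoint S := by
  set N : ι → Set ι := fun β => insert β (⋃ j ∈ S β, {α | j ∈ S α})
  have hN : ∀ β, #(N β) ≤ ℵ₀ := fun β =>
    Cardinal.mk_le_aleph0_iff.2 (((hS β).biUnion fun j _ => hfiber j).insert β).to_subtype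
  have hsmall : #(⋃ β ∈ Λ, N β) < #ι :=
    (Cardinal.mk_biUnion_le N Λ).trans_lt
      (Cardinal.mul_lt_of_lt hκ.le hlt ((ciSup_le' fun β : Λ => hN β).trans_lt hκ))
  obtain ⟨α, hα⟩ : ∃ α, α ∉ ⋃ β ∈ Λ, N β := by
    by_contra! h
    rw [Set.eq_univ_of_forall h, Cardinal.mk_univ] at hsmall
    exact hsmall.false
  refine ⟨α, fun hαΛ => hα (Set.mem_biUnion hαΛ (Set.mem_insert α _)), ?_⟩
  refine hΛ.insert fun β hβ _ => Set.disjoint_left.2 fun j hjα hjβ => hα ?_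
  exact Set.mem_biUnion hβ (Set.mem_insert_of_mem _ (Set.mem_biUnion hjβ hjα))

lemma exists_pairwiseDisjoint_mk_eq_of_countable (hκ : ℵ₀ < #ι)
    (hS : ∀ α, (S α).Countable) (hfiber : ∀ j, {α | j ∈ S α}.Countable) :
    ∃ Λ : Set ι, #Λ = #ι ∧ Λ.PairwiseDisjoint S := by
  obtain ⟨Λ, hΛ⟩ := zorn_subset {Λ : Set ι | Λ.PairwiseDisjoint S} fun c hc hchain =>
    ⟨⋃₀ c, (Set.pairwiseDisjoint_sUnion hchain.directedOn).2 hc,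
      fun _ => Set.subset_sUnion_of_mem⟩
  refine ⟨Λ, (Cardinal.mk_set_le Λ).antisymm (not_lt.1 fun hlt => ?_), hΛ.prop⟩
  obtain ⟨α, hαΛ, hins⟩ :=
    exists_insert_pairwiseDisjoint_of_countable hκ hS hfiber hΛ.prop hlt
  exact hαΛ (hΛ.eq_of_subset hins (Set.subset_insert α Λ) ▸ Set.mem_insert α Λ)

end Combinatorics

theorem exists_disjointly_supported_image_general {X : Type u} [NormedAddCommGroup X]
    [NormedSpace ℝ X] {ικ : Type v}
    (hκ : Cardinal.aleph0 < Cardinal.mk ικ)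
    (x : ικ → X)
    (hx : IsC0BasisEquiv x ∨ ∃ q : ℝ, 1 < q ∧ IsLpBasisEquiv x q)
    {Y : Type w} [NormedAddCommGroup Y] [NormedSpace ℝ Y]
    {J : Type x} (b : J → Y) (f : J → Y →L[ℝ] ℝ) (hbf : IsMBasis b f)
    (T : X →L[ℝ] Y) :
    ∃ Λ : Set ικ, Cardinal.mk Λ = Cardinal.mk ικ ∧
      ∀ α ∈ Λ, ∀ β ∈ Λ, α ≠ β →
        Disjoint {j : J | f j (T (x α)) ≠ 0} {j : J | f j (T (x β)) ≠ 0} := by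
  obtain ⟨r, hr, hxr⟩ : ∃ r < 1, HasUpperSumEstimate x r := by
    rcases hx with hc0 | ⟨q, hq, hlp⟩
    · exact ⟨0, zero_lt_one, hc0.hasUpperSumEstimate⟩
    · exact ⟨1 / q, (div_lt_one (by linarith)).2 hq, hlp.hasUpperSumEstimate (by linarith)⟩
  exact exists_pairwiseDisjoint_mk_eq_of_countable hκ
    (fun α => countable_support_of_dense_span hbf.biorth_ne hbf.fundamental (T (x α)))
    (fun j => hxr.countable_setOf_ne_zero hr ((f j).comp T))

/-- Images of a long `c₀`- or `ℓ_p`-basic family under a non-zero operator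
into a space with an M-basis admit a full-cardinality disjointly supported subfamily. -/
theorem exists_disjointly_supported_image {X : Type u} [NormedAddCommGroup X]
    [NormedSpace ℝ X] [CompleteSpace X] {ικ : Type v}
    (hκ : Cardinal.aleph0 < Cardinal.mk ικ)
    (x : ικ → X)
    (hx : IsC0BasisEquiv x ∨ ∃ q : ℝ, 1 < q ∧ IsLpBasisEquiv x q)
    {Y : Type w} [NormedAddCommGroup Y] [NormedSpace ℝ Y] [CompleteSpace Y]
    {J : Type x} (b : J → Y) (f : J → Y →L[ℝ] ℝ) (hbf : IsMBasis b f)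
    (T : X →L[ℝ] Y) (hT : T ≠ 0) :
    ∃ Λ : Set ικ, Cardinal.mk Λ = Cardinal.mk ικ ∧
      ∀ α ∈ Λ, ∀ β ∈ Λ, α ≠ β →
        Disjoint {j : J | f j (T (x α)) ≠ 0} {j : J | f j (T (x β)) ≠ 0} :=
  exists_disjointly_supported_image_general hκ x hx b f hbf T
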